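/- Let G be a group with a subgroup H of index 2. In the representation ring R(G), for any virtual representations E and F of G with Res_H E = Res_H F, the element E − F lies in the ideal R(G)·(ℂ₊ − ℂ₋) generated by ℂ₊ − ℂ₋, where ℂ₊ and ℂ₋ are the trivial and sign representations of G/H inflated to G. -/

import Mathlib

/-- The direct sum of two representations on the product space. -/
def prodRep {G : Type} [Group G] {V W : Type} [AddCommGroup V] [Module ℂ V]
    [AddCommGroup W] [Module ℂ W]
    (ρ : Representation ℂ G V) (τ : Representation ℂ G W) :
    Representation ℂ G (V × W) where
  toFun g := (ρ g).prodMap (τ g)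
  map_one' := by ext v <;> simp
  map_mul' g g' := by ext v <;> simp

/-- The twist of a representation by a one-dimensional character `u : G →* ℂˣ`
(i.e. the tensor product `W ⊗ U`). -/
def twist {G : Type} [Group G] {V : Type} [AddCommGroup V] [Module ℂ V]
    (u : G →* ℂˣ) (ρ : Representation ℂ G V) : Representation ℂ G V where
  toFun g := (u g : ℂ) • ρ g
  map_one' := by simp
  map_mul' g g' := by
    ext v
    simp only [map_mul, Units.val_mul, LinearMap.smul_apply, Module.End.mul_apply,
      map_smul, smul_smul]
    ring_nf

/-!
Let `φ : E ≅ F` be an isomorphism of the restrictions to `H`, and `s ∉ H`. The translate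
`ψ = linHom ρE ρF s φ = ρF(s) ∘ φ ∘ ρE(s)⁻¹` is again `H`-equivariant, and every `g ∉ H` swaps
`φ` and `ψ`.
Hence `N = φ + ψ` is a `G`-map `E → F` and `M = φ - ψ` a `G`-map `E ⊗ ℂ₋ → F`; the same
construction on `φ⁻¹` gives `N'`, `M'` the other way, with `N'N + M'M = 4` and `NN' + MM' = 4`.
Fitting's lemma for the `G`-endomorphism `N'N` splits `E = P ⊕ Q` into `G`-stable pieces, `N'N`
nilpotent on `P` and invertible on `Q`. Then `N` is injective on `Q`, `M` on `P`, their images are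
independent, and `(q + p, x) ↦ (N q + M x, p)` is an isomorphism `E ⊕ (P ⊗ ℂ₋) ≅ F ⊕ P`,
that is, `E − F = (ℂ₊ − ℂ₋) P` in `R(G)`.
-/

namespace Module.End

variable {R V : Type*} [Ring R] [AddCommGroup V] [Module R V] {f g : Module.End R V}

theorem ker_pow_le_comap_of_commute (h : Commute f g) (n : ℕ) :
    LinearMap.ker (f ^ n) ≤ (LinearMap.ker (f ^ n)).comap g := fun x hx => by
  rw [Submodule.mem_comap, LinearMap.mem_ker, ← mul_apply, (h.pow_left n).eq, mul_apply,
    LinearMap.mem_ker.mp hx, map_zero]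

theorem range_pow_le_comap_of_commute (h : Commute f g) (n : ℕ) :
    LinearMap.range (f ^ n) ≤ (LinearMap.range (f ^ n)).comap g := by
  rintro _ ⟨y, rfl⟩
  exact ⟨g y, by rw [← mul_apply, (h.pow_left n).eq, mul_apply]⟩

theorem eq_zero_of_mem_range_pow_of_apply_eq_zero {n : ℕ} (hn : n ≠ 0)
    (hf : Disjoint (LinearMap.ker (f ^ n)) (LinearMap.range (f ^ n))) {v : V}
    (hv : v ∈ LinearMap.range (f ^ n)) (hfv : f v = 0) : v = 0 := by
  refine Submodule.disjoint_def.mp hf v ?_ hv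
  obtain ⟨k, rfl⟩ := Nat.exists_eq_succ_of_ne_zero hn
  rw [LinearMap.mem_ker, pow_succ, mul_apply, hfv, map_zero]

theorem eq_zero_of_mem_ker_pow_of_apply_eq_smul {K V : Type*} [Field K] [AddCommGroup V]
    [Module K V] {f : Module.End K V} {n : ℕ} {c : K} (hc : c ≠ 0) {x : V}
    (hx : x ∈ LinearMap.ker (f ^ n)) (hfx : f x = c • x) : x = 0 := by
  have hpow (k : ℕ) : (f ^ k) x = c ^ k • x := by
    induction k with
    | zero => simp
    | succ k ih => rw [pow_succ, mul_apply, hfx, map_smul, ih, smul_smul, pow_succ']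
  rw [LinearMap.mem_ker, hpow] at hx
  exact (smul_eq_zero.mp hx).resolve_left (pow_ne_zero n hc)

end Module.End

theorem Submodule.commute_projection_of_le_comap {R V : Type*} [Ring R] [AddCommGroup V]
    [Module R V] {p q : Submodule R V} (hpq : IsCompl p q) {T : Module.End R V}
    (hp : p ≤ p.comap T) (hq : q ≤ q.comap T) : Commute (p.projection q hpq) T :=
  (LinearMap.IsIdempotentElem.commute_iff (isIdempotentElem_projection hpq)).mpr
    ⟨by rwa [range_projection, Module.End.mem_invtSubmodule],
      by rwa [ker_projection, Module.End.mem_invtSubmodule]⟩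

section

variable {K V W : Type*} [Field K] [AddCommGroup V] [Module K V] [AddCommGroup W] [Module K W]
  {N M : V →ₗ[K] W} {N' M' : W →ₗ[K] V} {c : K}

theorem commute_comp_comp_of_comp_add_comp_eq_smul
    (hV : ∀ v, N' (N v) + M' (M v) = c • v) (hW : ∀ w, N (N' w) + M (M' w) = c • w) :
    Commute (N' ∘ₗ N) (N' ∘ₗ M) := by
  ext v
  simp only [Module.End.mul_apply, LinearMap.comp_apply]
  rw [eq_sub_of_add_eq (hW _), eq_sub_of_add_eq (hV v), map_sub, map_sub, map_sub, map_smul,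
    map_smul, map_smul]

theorem eq_zero_of_apply_add_apply_eq_zero (hc : c ≠ 0)
    (hV : ∀ v, N' (N v) + M' (M v) = c • v) (hW : ∀ w, N (N' w) + M (M' w) = c • w) {n : ℕ}
    (hn : n ≠ 0)
    (hfit : Disjoint (LinearMap.ker ((N' ∘ₗ N) ^ n)) (LinearMap.range ((N' ∘ₗ N) ^ n)))
    {v x : V} (hv : v ∈ LinearMap.range ((N' ∘ₗ N) ^ n)) (hx : x ∈ LinearMap.ker ((N' ∘ₗ N) ^ n))
    (h : N v + M x = 0) : v = 0 ∧ x = 0 := by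
  have hMx : N' (M x) ∈ LinearMap.ker ((N' ∘ₗ N) ^ n) :=
    Module.End.ker_pow_le_comap_of_commute (commute_comp_comp_of_comp_add_comp_eq_smul hV hW) n hx
  have hNv : N' (N v) ∈ LinearMap.range ((N' ∘ₗ N) ^ n) :=
    Module.End.range_pow_le_comap_of_commute (Commute.refl _) n hv
  have hNv_eq : N' (N v) = -N' (M x) := by
    rw [eq_neg_iff_add_eq_zero, ← map_add, h, map_zero]
  obtain rfl : v = 0 := Module.End.eq_zero_of_mem_range_pow_of_apply_eq_zero hn hfit hv
    (Submodule.disjoint_def.mp hfit _ (hNv_eq ▸ neg_mem hMx) hNv)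
  rw [map_zero, zero_add] at h
  refine ⟨rfl, Module.End.eq_zero_of_mem_ker_pow_of_apply_eq_smul hc hx ?_⟩
  simpa [h] using hV x

end

namespace Representation

theorem exists_equiv_prod_subrepresentation {K G V W : Type*} [Field K] [Monoid G]
    [AddCommGroup V] [Module K V] [FiniteDimensional K V]
    [AddCommGroup W] [Module K W] [FiniteDimensional K W]
    {ρ ρ' : Representation K G V} {σ : Representation K G W}
    {N : IntertwiningMap ρ σ} {N' : IntertwiningMap σ ρ}
    {M : IntertwiningMap ρ' σ} {M' : IntertwiningMap σ ρ'} {c : K}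
    (hdim : Module.finrank K V = Module.finrank K W) (hc : c ≠ 0)
    (hV : ∀ v, N' (N v) + M' (M v) = c • v) (hW : ∀ w, N (N' w) + M (M' w) = c • w) :
    ∃ (P : Submodule K V) (hP : ∀ g, P ≤ P.comap (ρ g)) (hP' : ∀ g, P ≤ P.comap (ρ' g)),
      Nonempty ((ρ.prod (ρ'.subrepresentation P hP')).Equiv
        (σ.prod (ρ.subrepresentation P hP))) := by
  set D := N'.toLinearMap ∘ₗ N.toLinearMap
  have hDρ (g : G) : Commute D (ρ g) := (N'.comp N).isIntertwining' g
  have hDρ' (g : G) : Commute D (ρ' g) := by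
    have hD : D = c • 1 - M'.toLinearMap ∘ₗ M.toLinearMap := by
      ext v; exact eq_sub_of_add_eq (hV v)
    rw [hD]
    exact ((Commute.one_left _).smul_left c).sub_left ((M'.comp M).isIntertwining' g)
  obtain ⟨n, hn⟩ := Filter.eventually_atTop.mp D.eventually_isCompl_ker_pow_range_pow
  have hPQ := hn (n + 1) n.le_succ
  set P := LinearMap.ker (D ^ (n + 1))
  set Q := LinearMap.range (D ^ (n + 1))
  have hP (g : G) : P ≤ P.comap (ρ g) := Module.End.ker_pow_le_comap_of_commute (hDρ g) _
  have hQ (g : G) : Q ≤ Q.comap (ρ g) := Module.End.range_pow_le_comap_of_commute (hDρ g) _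
  have hP' (g : G) : P ≤ P.comap (ρ' g) := Module.End.ker_pow_le_comap_of_commute (hDρ' g) _
  let Φ : V × P →ₗ[K] W × P :=
    ((N.toLinearMap ∘ₗ Q.projection P hPQ.symm).coprod (M.toLinearMap ∘ₗ P.subtype)).prod
      (P.projectionOnto Q hPQ ∘ₗ LinearMap.fst K V P)
  have hΦ (v : V) (x : P) :
      Φ (v, x) = (N (Q.projection P hPQ.symm v) + M x, P.projectionOnto Q hPQ v) := rfl
  refine ⟨P, hP, hP', ⟨IntertwiningMap.ofBijective
    (Φ.intertwiningMap_of_isIntertwiningMap _ _ fun g ⟨v, x⟩ => ?_) ?_⟩⟩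
  · have hp := Submodule.commute_projection_of_le_comap hPQ (hP g) (hQ g)
    have hq := Submodule.commute_projection_of_le_comap hPQ.symm (hQ g) (hP g)
    rw [prod_apply_apply, hΦ, hΦ, prod_apply_apply, map_add, ← N.isIntertwining,
      ← M.isIntertwining]
    refine Prod.ext ?_ (Subtype.ext ?_)
    · exact congrArg (N · + _) (LinearMap.congr_fun hq.eq v)
    · exact LinearMap.congr_fun hp.eq v
  · refine (fun hinj => ⟨hinj, (LinearMap.injective_iff_surjective_of_finrank_eq_finrank
      (by simp only [Module.finrank_prod, hdim])).mp hinj⟩) ?_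
    refine (injective_iff_map_eq_zero Φ).mpr fun ⟨v, x⟩ h => ?_
    rw [hΦ, Prod.mk_eq_zero, Submodule.projectionOnto_apply_eq_zero_iff] at h
    obtain ⟨h, hv⟩ := h
    rw [Submodule.projection_apply_of_mem_left hPQ.symm hv] at h
    obtain ⟨rfl, hx⟩ :=
      eq_zero_of_apply_add_apply_eq_zero hc hV hW n.succ_ne_zero hPQ.disjoint hv x.2 h
    exact Prod.ext rfl (Subtype.ext hx)

section IndexTwo

variable {k G X : Type*} [CommSemiring k] [Group G] [AddCommMonoid X] [Module k X]
  (τ : Representation k G X) {H : Subgroup G} {x : X} {s : G}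

theorem apply_eq_apply_of_notMem_of_index_two {g : G} (hH : H.index = 2)
    (hx : ∀ h ∈ H, τ h x = x) (hs : s ∉ H) (hg : g ∉ H) : τ g x = τ s x := by
  have hsg : s⁻¹ * g ∈ H :=
    (Subgroup.mul_mem_iff_of_index_two hH).mpr (iff_of_false (inv_mem_iff.not.mpr hs) hg)
  rw [← mul_inv_cancel_left s g, map_mul, Module.End.mul_apply, hx _ hsg]

theorem apply_apply_eq_self_of_notMem_of_index_two {g : G} (hH : H.index = 2)
    (hx : ∀ h ∈ H, τ h x = x) (hs : s ∉ H) (hg : g ∉ H) : τ g (τ s x) = x := by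
  have hgs : g * s ∈ H := (Subgroup.mul_mem_iff_of_index_two hH).mpr (iff_of_false hg hs)
  rw [← Module.End.mul_apply, ← map_mul, hx _ hgs]

theorem apply_apply_eq_apply_of_mem_of_index_two {g : G} (hH : H.index = 2)
    (hx : ∀ h ∈ H, τ h x = x) (hs : s ∉ H) (hg : g ∈ H) : τ g (τ s x) = τ s x := by
  have hgs : g * s ∉ H := fun h => hs ((H.mul_mem_cancel_left hg).mp h)
  rw [← Module.End.mul_apply, ← map_mul, apply_eq_apply_of_notMem_of_index_two τ hH hx hs hgs]

theorem apply_add_apply_eq_self_of_index_two (hH : H.index = 2) (hx : ∀ h ∈ H, τ h x = x)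
    (hs : s ∉ H) (g : G) : τ g (x + τ s x) = x + τ s x := by
  by_cases hg : g ∈ H
  · rw [map_add, hx g hg, apply_apply_eq_apply_of_mem_of_index_two τ hH hx hs hg]
  · rw [map_add, apply_eq_apply_of_notMem_of_index_two τ hH hx hs hg,
      apply_apply_eq_self_of_notMem_of_index_two τ hH hx hs hg, add_comm]

end IndexTwo

theorem apply_sub_apply_eq_smul_of_index_two {G X : Type*} [Group G] [AddCommGroup X]
    [Module ℂ X] (τ : Representation ℂ G X) {H : Subgroup G} (hH : H.index = 2) {u : G →* ℂˣ}
    (hu₁ : ∀ g ∈ H, (u g : ℂ) = 1) (hu₂ : ∀ g ∉ H, (u g : ℂ) = -1) {x : X}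
    (hx : ∀ h ∈ H, τ h x = x) {s : G} (hs : s ∉ H) (g : G) :
    τ g (x - τ s x) = (u g : ℂ) • (x - τ s x) := by
  by_cases hg : g ∈ H
  · rw [hu₁ g hg, one_smul, map_sub, hx g hg,
      apply_apply_eq_apply_of_mem_of_index_two τ hH hx hs hg]
  · rw [hu₂ g hg, neg_one_smul, neg_sub, map_sub,
      apply_eq_apply_of_notMem_of_index_two τ hH hx hs hg,
      apply_apply_eq_self_of_notMem_of_index_two τ hH hx hs hg]

section Twist

variable {G V W : Type} [Group G] [AddCommGroup V] [Module ℂ V] [AddCommGroup W] [Module ℂ W]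
  {ρ : Representation ℂ G V} {σ : Representation ℂ G W} {u : G →* ℂˣ} {f : V →ₗ[ℂ] W}

theorem isIntertwiningMap_twist_left_of_linHom_apply_eq_smul
    (hf : ∀ g, linHom ρ σ g f = (u g : ℂ) • f) : (twist u ρ).IsIntertwiningMap σ f := by
  refine ⟨fun g v => ?_⟩
  have h := LinearMap.congr_fun (hf g) (ρ g v)
  simp only [linHom_apply, LinearMap.comp_apply, inv_self_apply, LinearMap.smul_apply] at h
  simp [twist, h]

theorem isIntertwiningMap_twist_right_of_linHom_apply_eq_smul (hu : ∀ g, (u g : ℂ) * u g = 1)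
    (hf : ∀ g, linHom ρ σ g f = (u g : ℂ) • f) : ρ.IsIntertwiningMap (twist u σ) f := by
  refine ⟨fun g v => ?_⟩
  have h := LinearMap.congr_fun (hf g) (ρ g v)
  simp only [linHom_apply, LinearMap.comp_apply, inv_self_apply, LinearMap.smul_apply] at h
  simp [twist, h, smul_smul, hu]

theorem exists_equiv_prod_twist_subrepresentation [FiniteDimensional ℂ V] [FiniteDimensional ℂ W]
    {H : Subgroup G} (hH : H.index = 2)
    (hu₁ : ∀ g ∈ H, (u g : ℂ) = 1) (hu₂ : ∀ g ∉ H, (u g : ℂ) = -1)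
    (φ : Representation.Equiv (ρ.comp H.subtype) (σ.comp H.subtype)) :
    ∃ (P : Submodule ℂ V) (hP : ∀ g, P ≤ P.comap (ρ g)) (hP' : ∀ g, P ≤ P.comap (twist u ρ g)),
      Nonempty ((ρ.prod ((twist u ρ).subrepresentation P hP')).Equiv
        (σ.prod (ρ.subrepresentation P hP))) := by
  obtain ⟨s, hs⟩ : ∃ s, s ∉ H := by
    obtain ⟨a, ha⟩ := Subgroup.index_eq_two_iff.mp hH
    exact ⟨a, by simpa using (ha 1).symm⟩
  have hu (g : G) : (u g : ℂ) * u g = 1 := by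
    by_cases hg : g ∈ H <;> simp [hu₁, hu₂, hg]
  have hφ (h) (hh : h ∈ H) : linHom ρ σ h φ.toLinearMap = φ.toLinearMap :=
    (mem_linHom_invariants_iff_isIntertwining _).mpr ⟨φ.toIntertwiningMap.isIntertwining⟩ ⟨h, hh⟩
  have hφ' (h) (hh : h ∈ H) : linHom σ ρ h φ.symm.toLinearMap = φ.symm.toLinearMap :=
    (mem_linHom_invariants_iff_isIntertwining _).mpr
      ⟨φ.symm.toIntertwiningMap.isIntertwining⟩ ⟨h, hh⟩
  let ψ := linHom ρ σ s φ.toLinearMap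
  let ψ' := linHom σ ρ s φ.symm.toLinearMap
  let N : IntertwiningMap ρ σ := (φ.toLinearMap + ψ).intertwiningMap_of_isIntertwiningMap ρ σ
    ((mem_linHom_invariants_iff_isIntertwining _).mp
      (apply_add_apply_eq_self_of_index_two _ hH hφ hs)).isIntertwining
  let N' : IntertwiningMap σ ρ := (φ.symm.toLinearMap + ψ').intertwiningMap_of_isIntertwiningMap
    σ ρ ((mem_linHom_invariants_iff_isIntertwining _).mp
      (apply_add_apply_eq_self_of_index_two _ hH hφ' hs)).isIntertwining
  let M : IntertwiningMap (twist u ρ) σ := (φ.toLinearMap - ψ).intertwiningMap_of_isIntertwiningMap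
    _ σ (isIntertwiningMap_twist_left_of_linHom_apply_eq_smul
      (apply_sub_apply_eq_smul_of_index_two _ hH hu₁ hu₂ hφ hs)).isIntertwining
  let M' : IntertwiningMap σ (twist u ρ) :=
    (φ.symm.toLinearMap - ψ').intertwiningMap_of_isIntertwiningMap σ _
      (isIntertwiningMap_twist_right_of_linHom_apply_eq_smul hu
        (apply_sub_apply_eq_smul_of_index_two _ hH hu₁ hu₂ hφ' hs)).isIntertwining
  have hψ (v : V) : ψ' (ψ v) = v := by simp [ψ, ψ']
  have hψ' (w : W) : ψ (ψ' w) = w := by simp [ψ, ψ']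
  refine exists_equiv_prod_subrepresentation (N := N) (N' := N') (M := M) (M' := M')
    φ.toLinearEquiv.finrank_eq (by norm_num : (4 : ℂ) ≠ 0) (fun v => ?_) (fun w => ?_)
  · simp only [N, N', M, M', LinearMap.toIntertwiningMap, LinearMap.add_apply,
      LinearMap.sub_apply, IntertwiningMap.coe_toLinearMap, Equiv.coe_toIntertwiningMap, map_add,
      map_sub, Equiv.symm_apply_apply, hψ]
    module
  · simp only [N, N', M, M', LinearMap.toIntertwiningMap, LinearMap.add_apply,
      LinearMap.sub_apply, IntertwiningMap.coe_toLinearMap, Equiv.coe_toIntertwiningMap, map_add,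
      map_sub, Equiv.apply_symm_apply, hψ']
    module

theorem exists_fin_equiv_of_equiv_prod_subrepresentation {P : Submodule ℂ V}
    [FiniteDimensional ℂ P] {hP : ∀ g, P ≤ P.comap (ρ g)} {hP' : ∀ g, P ≤ P.comap (twist u ρ g)}
    (e : (ρ.prod ((twist u ρ).subrepresentation P hP')).Equiv
      (σ.prod (ρ.subrepresentation P hP))) :
    ∃ (nA nB : ℕ) (ρA : Representation ℂ G (Fin nA → ℂ))
      (ρB : Representation ℂ G (Fin nB → ℂ))
      (e : (V × ((Fin nA → ℂ) × (Fin nB → ℂ))) ≃ₗ[ℂ]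
        (W × ((Fin nA → ℂ) × (Fin nB → ℂ)))),
      ∀ (g : G) (v : V × ((Fin nA → ℂ) × (Fin nB → ℂ))),
        e (prodRep ρ (prodRep (twist u ρA) ρB) g v) =
          prodRep σ (prodRep ρA (twist u ρB)) g (e v) := by
  let n := Module.finrank ℂ P
  let b : P ≃ₗ[ℂ] (Fin n → ℂ) := (Module.finBasis ℂ P).equivFun
  let β : P ≃ₗ[ℂ] (Fin n → ℂ) × (Fin 0 → ℂ) := b.trans LinearEquiv.prodUnique.symm
  let ρA : Representation ℂ G (Fin n → ℂ) :=
    (b.conjAlgEquiv ℂ : Module.End ℂ P →* Module.End ℂ (Fin n → ℂ)).comp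
      (ρ.subrepresentation P hP)
  refine ⟨n, 0, ρA, 1,
    ((LinearEquiv.refl ℂ V).prodCongr β.symm).trans
      (e.toLinearEquiv.trans ((LinearEquiv.refl ℂ W).prodCongr β)), fun g x => ?_⟩
  have hβ₁ (y) : β.symm (prodRep (twist u ρA) 1 g y) =
      (twist u ρ).subrepresentation P hP' g (β.symm y) :=
    Subtype.ext (by simp [β, ρA, twist, prodRep])
  have hβ₂ (y) : β (ρ.subrepresentation P hP g y) = prodRep ρA (twist u 1) g (β y) :=
    Prod.ext (by simp [β, ρA, twist, prodRep]) (Subsingleton.elim _ _)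
  have he := IntertwiningMap.isIntertwining _ _ e.toIntertwiningMap g (x.1, β.symm x.2)
  simp only [prod_apply_apply, Equiv.coe_toIntertwiningMap] at he
  have hx : prodRep ρ (prodRep (twist u ρA) 1) g x = (ρ g x.1, prodRep (twist u ρA) 1 g x.2) :=
    rfl
  simp only [LinearEquiv.trans_apply, LinearEquiv.prodCongr_apply, LinearEquiv.refl_apply,
    Equiv.toLinearEquiv_apply, Equiv.coe_toIntertwiningMap, hx, hβ₁, he, hβ₂]
  rfl

end Twist

end Representation

/-- `E ⊕ (A ⊗ ℂ₋) ⊕ B ≅ F ⊕ A ⊕ (B ⊗ ℂ₋)` says `E − F = (ℂ₊ − ℂ₋)(A − B)` in `R(G)`. -/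
theorem kernel_res_in_ideal_general {G : Type} [Group G]
    (H : Subgroup G) (hidx : H.index = 2)
    (u : G →* ℂˣ) (hu : ∀ g : G, ((u g : ℂ) = 1 ↔ g ∈ H) ∧ ((u g : ℂ) = 1 ∨ (u g : ℂ) = -1))
    {VE VF : Type} [AddCommGroup VE] [Module ℂ VE] [FiniteDimensional ℂ VE]
    [AddCommGroup VF] [Module ℂ VF] [FiniteDimensional ℂ VF]
    (ρE : Representation ℂ G VE) (ρF : Representation ℂ G VF)
    (hres : ∃ e : VE ≃ₗ[ℂ] VF, ∀ (h : H) (v : VE), e (ρE (h : G) v) = ρF (h : G) (e v)) :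
    ∃ (nA nB : ℕ) (ρA : Representation ℂ G (Fin nA → ℂ))
      (ρB : Representation ℂ G (Fin nB → ℂ))
      (e : (VE × ((Fin nA → ℂ) × (Fin nB → ℂ))) ≃ₗ[ℂ]
        (VF × ((Fin nA → ℂ) × (Fin nB → ℂ)))),
      ∀ (g : G) (v : VE × ((Fin nA → ℂ) × (Fin nB → ℂ))),
        e (prodRep ρE (prodRep (twist u ρA) ρB) g v) =
          prodRep ρF (prodRep ρA (twist u ρB)) g (e v) := by
  obtain ⟨φ, hφ⟩ := hres
  have hu₁ (g : G) (hg : g ∈ H) : (u g : ℂ) = 1 := (hu g).1.mpr hg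
  have hu₂ (g : G) (hg : g ∉ H) : (u g : ℂ) = -1 := (hu g).2.resolve_left (mt (hu g).1.mp hg)
  obtain ⟨P, hP, hP', ⟨e⟩⟩ := Representation.exists_equiv_prod_twist_subrepresentation hidx
    hu₁ hu₂ (.mk φ fun h => LinearMap.ext (hφ h))
  exact Representation.exists_fin_equiv_of_equiv_prod_subrepresentation e

/-- Let `G` be a finite group with a subgroup `H` of index 2, and let `ℂ₊`, `ℂ₋` be the
trivial and sign representations of `G/H` inflated to `G` (`ℂ₋` given by the
homomorphism `u : G →* ℂˣ` taking value `1` on `H` and `-1` off `H`).  For any virtual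
representations `E − F` with `Res_H E = Res_H F` (formulated with honest representations
`E`, `F` whose restrictions to `H` are isomorphic), the element `E − F` of the
representation ring `R(G)` lies in the ideal generated by `ℂ₊ − ℂ₋`; that is, there are
representations `A`, `B` with `E ⊕ (A ⊗ ℂ₋) ⊕ B ≅ F ⊕ A ⊕ (B ⊗ ℂ₋)`. -/
theorem kernel_res_in_ideal {G : Type} [Group G] [Finite G]
    (H : Subgroup G) (hidx : H.index = 2)
    (u : G →* ℂˣ) (hu : ∀ g : G, ((u g : ℂ) = 1 ↔ g ∈ H) ∧ ((u g : ℂ) = 1 ∨ (u g : ℂ) = -1))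
    {VE VF : Type} [AddCommGroup VE] [Module ℂ VE] [FiniteDimensional ℂ VE]
    [AddCommGroup VF] [Module ℂ VF] [FiniteDimensional ℂ VF]
    (ρE : Representation ℂ G VE) (ρF : Representation ℂ G VF)
    (hres : ∃ e : VE ≃ₗ[ℂ] VF, ∀ (h : H) (v : VE), e (ρE (h : G) v) = ρF (h : G) (e v)) :
    ∃ (nA nB : ℕ) (ρA : Representation ℂ G (Fin nA → ℂ))
      (ρB : Representation ℂ G (Fin nB → ℂ))
      (e : (VE × ((Fin nA → ℂ) × (Fin nB → ℂ))) ≃ₗ[ℂ]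
        (VF × ((Fin nA → ℂ) × (Fin nB → ℂ)))),
      ∀ (g : G) (v : VE × ((Fin nA → ℂ) × (Fin nB → ℂ))),
        e (prodRep ρE (prodRep (twist u ρA) ρB) g v) =
          prodRep ρF (prodRep ρA (twist u ρB)) g (e v) :=
  kernel_res_in_ideal_general H hidx u hu ρE ρF hres
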